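/- arXiv:1206.5344 — 2 statements merged into one kernel-verified Lean document; each statement's English description precedes it below -/
import Mathlib

section
/- If a symmetric positive definite matrix P satisfies P·Aᵢ + Aᵢᵀ·P ≺ 0 for matrices A₁,…,A_L, and x : ℝ → ℝⁿ solves the differential inclusion ẋ(t) = A(t)x(t) where A(t) ∈ conv{A₁,…,A_L} for all t, then V(t) = x(t)ᵀPx(t) is nonincreasing, and hence ‖x(t)‖ is bounded by √(λ_max(P)/λ_min(P))·‖x(0)‖ for all t ≥ 0. -/
/-!
Along a solution, `V = xᵀPx` has derivative `xᵀ(P A(t) + A(t)ᵀP)x`. The matrix `P A(t) + A(t)ᵀP`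
is a conic combination of the negative semidefinite matrices `P Aᵢ + AᵢᵀP`, so `V' ≤ 0` and `V`
is antitone. Sandwiching `V` between `λ_min(P)‖x‖²` and `λ_max(P)‖x‖²` then bounds `‖x(t)‖`.
-/

open Matrix

theorem HasDerivAt.dotProduct {ι : Type*} [Fintype ι] {f g : ℝ → ι → ℝ} {f' g' : ι → ℝ}
    {t : ℝ} (hf : HasDerivAt f f' t) (hg : HasDerivAt g g' t) :
    HasDerivAt (fun s => f s ⬝ᵥ g s) (f' ⬝ᵥ g t + f t ⬝ᵥ g') t := by
  have := HasDerivAt.fun_sum (u := Finset.univ) fun i _ =>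
    (hasDerivAt_pi.mp hf i).mul (hasDerivAt_pi.mp hg i)
  simpa [_root_.dotProduct, Finset.sum_add_distrib] using this

theorem HasDerivAt.const_mulVec {ι : Type*} [Fintype ι] (M : Matrix ι ι ℝ) {f : ℝ → ι → ℝ}
    {f' : ι → ℝ} {t : ℝ} (hf : HasDerivAt f f' t) :
    HasDerivAt (fun s => M *ᵥ f s) (M *ᵥ f') t :=
  (LinearMap.toContinuousLinearMap (mulVecLin M)).hasFDerivAt.comp_hasDerivAt t hf

namespace Matrix

open scoped MatrixOrder

variable {ι : Type*} [Fintype ι]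

theorem mulVec_dotProduct_mulVec_add_dotProduct_mulVec_mulVec (P B : Matrix ι ι ℝ)
    (v : ι → ℝ) :
    (B *ᵥ v) ⬝ᵥ (P *ᵥ v) + v ⬝ᵥ (P *ᵥ (B *ᵥ v)) = v ⬝ᵥ ((P * B + Bᵀ * P) *ᵥ v) := by
  rw [add_mulVec, dotProduct_add, add_comm, ← mulVec_mulVec, ← mulVec_mulVec,
    dotProduct_mulVec v Bᵀ, vecMul_transpose]

theorem posSemidef_neg_lyapunov_sum {κ : Type*} [Fintype κ] {P : Matrix ι ι ℝ}
    {A : κ → Matrix ι ι ℝ} {c : κ → ℝ} (hc : ∀ i, 0 ≤ c i)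
    (hA : ∀ i, (-(P * A i + (A i)ᵀ * P)).PosSemidef) :
    (-(P * ∑ i, c i • A i + (∑ i, c i • A i)ᵀ * P)).PosSemidef := by
  have hsum : -(P * ∑ i, c i • A i + (∑ i, c i • A i)ᵀ * P) =
      ∑ i, c i • -(P * A i + (A i)ᵀ * P) := by
    simp only [Finset.mul_sum, transpose_sum, Finset.sum_mul, transpose_smul, Matrix.mul_smul, smul_mul,
      ← Finset.sum_add_distrib, ← Finset.sum_neg_distrib, smul_add, smul_neg]
  rw [hsum, ← nonneg_iff_posSemidef]
  exact Finset.sum_nonneg fun i _ => nonneg_iff_posSemidef.mpr ((hA i).smul (hc i))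

theorem antitone_dotProduct_mulVec_of_posSemidef_neg_lyapunov {P : Matrix ι ι ℝ}
    {B : ℝ → Matrix ι ι ℝ} {x : ℝ → ι → ℝ} (hB : ∀ t, (-(P * B t + (B t)ᵀ * P)).PosSemidef)
    (hx : ∀ t, HasDerivAt x (B t *ᵥ x t) t) :
    Antitone fun t => x t ⬝ᵥ (P *ᵥ x t) := by
  refine antitone_of_hasDerivAt_nonpos (fun t => (hx t).dotProduct ((hx t).const_mulVec P))
    fun t => ?_
  have hquad := (hB t).dotProduct_mulVec_nonneg (x t)
  rw [star_trivial, neg_mulVec, dotProduct_neg] at hquad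
  rw [mulVec_dotProduct_mulVec_add_dotProduct_mulVec_mulVec]
  exact neg_nonneg.mp hquad

variable [DecidableEq ι] {P : Matrix ι ι ℝ}

theorem IsHermitian.mul_dotProduct_self_le_dotProduct_mulVec (hP : P.IsHermitian) {r : ℝ}
    (hr : ∀ i, r ≤ hP.eigenvalues i) (v : ι → ℝ) : r * (v ⬝ᵥ v) ≤ v ⬝ᵥ (P *ᵥ v) := by
  have hle : algebraMap ℝ _ r ≤ P := by
    rw [algebraMap_le_iff_le_spectrum hP.isSelfAdjoint, hP.spectrum_real_eq_range_eigenvalues]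
    rintro _ ⟨i, rfl⟩
    exact hr i
  simpa [sub_mulVec, Algebra.algebraMap_eq_smul_one, smul_mulVec] using
    (le_iff.mp hle).dotProduct_mulVec_nonneg v

theorem IsHermitian.dotProduct_mulVec_le_mul_dotProduct_self (hP : P.IsHermitian) {r : ℝ}
    (hr : ∀ i, hP.eigenvalues i ≤ r) (v : ι → ℝ) : v ⬝ᵥ (P *ᵥ v) ≤ r * (v ⬝ᵥ v) := by
  have hle : P ≤ algebraMap ℝ _ r := by
    rw [le_algebraMap_iff_spectrum_le hP.isSelfAdjoint, hP.spectrum_real_eq_range_eigenvalues]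
    rintro _ ⟨i, rfl⟩
    exact hr i
  simpa [sub_mulVec, Algebra.algebraMap_eq_smul_one, smul_mulVec] using
    (le_iff.mp hle).dotProduct_mulVec_nonneg v

end Matrix

theorem Real.sqrt_le_sqrt_div_mul_sqrt_of_mul_le {a b m M : ℝ} (hm : 0 < m) (hM : 0 ≤ M)
    (h : m * a ≤ M * b) : √a ≤ √(M / m) * √b := by
  rw [← Real.sqrt_mul (div_nonneg hM hm.le)]
  refine Real.sqrt_le_sqrt ?_
  rw [div_mul_eq_mul_div, le_div_iff₀ hm, mul_comm]
  exact h

/-- If `P = Pᵀ ≻ 0` with `P Aᵢ + Aᵢᵀ P ≺ 0` and `x` solves `ẋ = A(t)x` with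
`A(t) ∈ conv{A₁,…,A_L}`, then `V(t) = x(t)ᵀPx(t)` is nonincreasing and
`‖x(t)‖ ≤ √(λ_max(P)/λ_min(P)) ‖x(0)‖` for all `t ≥ 0`. -/
theorem stmt4 {n L : ℕ} [NeZero n] (A : Fin L → Matrix (Fin n) (Fin n) ℝ)
    (P : Matrix (Fin n) (Fin n) ℝ) (hP : P.PosDef)
    (hneg : ∀ i, (-(P * A i + (A i)ᵀ * P)).PosDef)
    (Af : ℝ → Matrix (Fin n) (Fin n) ℝ)
    (hAf : ∀ t, ∃ c : Fin L → ℝ, (∀ i, 0 ≤ c i) ∧ ∑ i, c i = 1 ∧ Af t = ∑ i, c i • A i)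
    (x : ℝ → Fin n → ℝ) (hx : ∀ t, HasDerivAt x (Af t *ᵥ x t) t) :
    (∀ s t : ℝ, 0 ≤ s → s ≤ t → x t ⬝ᵥ (P *ᵥ x t) ≤ x s ⬝ᵥ (P *ᵥ x s)) ∧
    (∀ t ≥ (0:ℝ), Real.sqrt (x t ⬝ᵥ x t) ≤
      Real.sqrt ((Finset.univ.sup' Finset.univ_nonempty hP.1.eigenvalues) /
        (Finset.univ.inf' Finset.univ_nonempty hP.1.eigenvalues)) *
        Real.sqrt (x 0 ⬝ᵥ x 0)) := by
  have hAf_neg : ∀ t, (-(P * Af t + (Af t)ᵀ * P)).PosSemidef := fun t => by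
    obtain ⟨c, hc, -, hct⟩ := hAf t
    rw [hct]
    exact posSemidef_neg_lyapunov_sum hc fun i => (hneg i).posSemidef
  have hV := antitone_dotProduct_mulVec_of_posSemidef_neg_lyapunov hAf_neg hx
  refine ⟨fun s t _ hst => hV hst, fun t ht => ?_⟩
  have hmin_pos : 0 < Finset.univ.inf' Finset.univ_nonempty hP.1.eigenvalues :=
    (Finset.lt_inf'_iff _).mpr fun i _ => hP.eigenvalues_pos i
  have hmax_nonneg : 0 ≤ Finset.univ.sup' Finset.univ_nonempty hP.1.eigenvalues :=
    (hP.eigenvalues_pos 0).le.trans (Finset.le_sup' _ (Finset.mem_univ 0))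
  refine Real.sqrt_le_sqrt_div_mul_sqrt_of_mul_le hmin_pos hmax_nonneg ?_
  calc _ ≤ x t ⬝ᵥ (P *ᵥ x t) := hP.1.mul_dotProduct_self_le_dotProduct_mulVec
          (fun i => Finset.inf'_le _ (Finset.mem_univ i)) (x t)
    _ ≤ x 0 ⬝ᵥ (P *ᵥ x 0) := hV ht
    _ ≤ _ := hP.1.dotProduct_mulVec_le_mul_dotProduct_self
          (fun i => Finset.le_sup' _ (Finset.mem_univ i)) (x 0)
end

section
/- Suppose a continuous nonlinear vector field F : ℝⁿ → ℝⁿ with F(0) = 0 satisfies: for every x, the Jacobian DF(x) belongs to a polytope S = conv{A₁,…,A_L}, and there exists P = Pᵀ ≻ 0 with PAᵢ + AᵢᵀP ≺ 0 for all i. Then xᵀPF(x) < 0 for all x ≠ 0 (so V(x) = xᵀPx is a strict Lyapunov function for ẋ = F(x)). -/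
/-!
Along the ray `t ↦ t • x`, the function `g t = xᵀ P F(t x)` vanishes at `0` and has derivative
`xᵀ P DF(t x) x`. The map `M ↦ xᵀ P M x` is linear, so `{M | xᵀ P M x < 0}` is a half-space and
hence convex; it contains every vertex `Aᵢ` (for symmetric `P`, `xᵀ P Aᵢ x` is half of
`xᵀ (P Aᵢ + Aᵢᵀ P) x`), hence the whole polytope, hence every Jacobian. So `g` is strictly
decreasing and `g 1 < g 0 = 0`.
-/

open Matrix

theorem Matrix.dotProduct_mulVec_mulVec_neg_of_posDef_neg_lyapunov {ι R : Type*} [Fintype ι]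
    [CommRing R] [LinearOrder R] [IsStrictOrderedRing R] [StarRing R] [TrivialStar R]
    {P A : Matrix ι ι R} (hP : P.IsSymm) (hA : (-(P * A + Aᵀ * P)).PosDef)
    {x : ι → R} (hx : x ≠ 0) : x ⬝ᵥ (P *ᵥ (A *ᵥ x)) < 0 := by
  have hpos := hA.dotProduct_mulVec_pos hx
  have hswap : x ⬝ᵥ ((Aᵀ * P) *ᵥ x) = x ⬝ᵥ ((P * A) *ᵥ x) := by
    rw [← mulVec_mulVec, dotProduct_mulVec, vecMul_transpose, dotProduct_comm,
      ← mulVec_mulVec, dotProduct_mulVec x P, ← vecMul_transpose, hP.eq]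
  rw [star_trivial, neg_mulVec, dotProduct_neg, add_mulVec, dotProduct_add, hswap] at hpos
  rw [mulVec_mulVec]
  linarith

theorem Matrix.convex_setOf_dotProduct_mulVec_mulVec_neg {ι R : Type*} [Fintype ι]
    [CommRing R] [LinearOrder R] [IsStrictOrderedRing R] (P : Matrix ι ι R) (x : ι → R) :
    Convex R {M : Matrix ι ι R | x ⬝ᵥ (P *ᵥ (M *ᵥ x)) < 0} :=
  convex_halfSpace_lt ⟨fun M N => by simp only [add_mulVec, mulVec_add, dotProduct_add],
    fun c M => by simp only [smul_mulVec, mulVec_smul, dotProduct_smul]⟩ 0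

theorem apply_lt_apply_zero_of_apply_fderiv_smul_neg {E G : Type*}
    [NormedAddCommGroup E] [NormedSpace ℝ E] [NormedAddCommGroup G] [NormedSpace ℝ G]
    {F : E → G} (hF : Differentiable ℝ F) (ℓ : G →L[ℝ] ℝ) (x : E)
    (hneg : ∀ t : ℝ, ℓ (fderiv ℝ F (t • x) x) < 0) : ℓ (F x) < ℓ (F 0) := by
  have hderiv : ∀ t : ℝ, HasDerivAt (fun s : ℝ => ℓ (F (s • x))) (ℓ (fderiv ℝ F (t • x) x)) t :=
    fun t => ℓ.hasFDerivAt.comp_hasDerivAt t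
      ((hF (t • x)).hasFDerivAt.comp_hasDerivAt t (by simpa using (hasDerivAt_id t).smul_const x))
  simpa using strictAnti_of_hasDerivAt_neg hderiv hneg zero_lt_one

/-- Global linearization: if `F` is `C¹`, `F(0) = 0`, the Jacobian `DF(x)` lies in the
polytope `conv{A₁,…,A_L}` for every `x`, and `P = Pᵀ ≻ 0` satisfies `P Aᵢ + Aᵢᵀ P ≺ 0`
for each `i`, then `xᵀ P F(x) < 0` for all `x ≠ 0`. -/
theorem stmt5 {n L : ℕ} (F : (Fin n → ℝ) → (Fin n → ℝ))
    (hF : ContDiff ℝ 1 F) (hF0 : F 0 = 0)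
    (A : Fin L → Matrix (Fin n) (Fin n) ℝ)
    (P : Matrix (Fin n) (Fin n) ℝ) (hP : P.PosDef)
    (hneg : ∀ i, (-(P * A i + (A i)ᵀ * P)).PosDef)
    (hDF : ∀ x : Fin n → ℝ, ∃ c : Fin L → ℝ, (∀ i, 0 ≤ c i) ∧ ∑ i, c i = 1 ∧
      LinearMap.toMatrix' ((fderiv ℝ F x : (Fin n → ℝ) →L[ℝ] (Fin n → ℝ)) :
        (Fin n → ℝ) →ₗ[ℝ] (Fin n → ℝ)) = ∑ i, c i • A i) :
    ∀ x : Fin n → ℝ, x ≠ 0 → x ⬝ᵥ (P *ᵥ F x) < 0 := by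
  intro x hx
  let ℓ : (Fin n → ℝ) →L[ℝ] ℝ := LinearMap.toContinuousLinearMap (toLinearMap₂' ℝ P x)
  have hjac : ∀ y, ℓ (fderiv ℝ F y x) < 0 := by
    intro y
    obtain ⟨c, hc0, hc1, hc⟩ := hDF y
    have hmem := (convex_setOf_dotProduct_mulVec_mulVec_neg P x).sum_mem (fun i _ => hc0 i) hc1
      fun i _ => dotProduct_mulVec_mulVec_neg_of_posDef_neg_lyapunov hP.isHermitian (hneg i) hx
    rw [← hc, Set.mem_ofPred_eq, LinearMap.toMatrix'_mulVec] at hmem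
    simpa [ℓ, toLinearMap₂'_apply'] using hmem
  simpa [ℓ, toLinearMap₂'_apply', hF0] using
    apply_lt_apply_zero_of_apply_fderiv_smul_neg (hF.differentiable one_ne_zero) ℓ x
      fun t => hjac (t • x)
end
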